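/- arXiv:2404.01362 — 2 statements merged into one kernel-verified Lean document; each statement's English description precedes it below -/
import Mathlib

section
/- Let p be a prime, d a positive integer, and G a transitive subgroup of the symmetric group on p^d letters. Then any Sylow p-subgroup of G acts transitively on the p^d letters. -/
/-- Let `p` be a prime, `d` a positive integer, and `G` a transitive subgroup of the
symmetric group on `p ^ d` letters. Then any Sylow `p`-subgroup of `G` acts transitively
on the `p ^ d` letters. -/
theorem sylow_transitive_of_primepower_degree
    (p d : ℕ) (hp : p.Prime) (hd : 0 < d)
    (Ω : Type*) [Fintype Ω] (hΩ : Fintype.card Ω = p ^ d)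
    (G : Subgroup (Equiv.Perm Ω)) (htrans : MulAction.IsPretransitive G Ω)
    (P : Sylow p G) :
    MulAction.IsPretransitive (P : Subgroup G) Ω := by
  classical
  haveI : Fact p.Prime := ⟨hp⟩
  haveI := htrans
  suffices h : ∀ y : Ω, MulAction.orbit (P : Subgroup G) y = Set.univ by
    refine ⟨fun a b => ?_⟩
    have hb : b ∈ MulAction.orbit (P : Subgroup G) a := (h a).symm ▸ Set.mem_univ b
    obtain ⟨g, hg⟩ := hb
    exact ⟨g, hg⟩
  intro y
  set K := MulAction.stabilizer G y with hK
  set S := MulAction.stabilizer (↥(P : Subgroup G)) y with hS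
  set n := Nat.card (MulAction.orbit (↥(P : Subgroup G)) y) with hn
  -- orbit-stabilizer for G
  have hG : Nat.card (MulAction.orbit G y) * Nat.card K = Nat.card G := by
    rw [← Nat.card_prod]
    exact Nat.card_congr (MulAction.orbitProdStabilizerEquivGroup G y)
  have horbG : Nat.card (MulAction.orbit G y) = p ^ d := by
    rw [MulAction.orbit_eq_univ]
    rw [Nat.card_congr (Equiv.Set.univ Ω), Nat.card_eq_fintype_card, hΩ]
  rw [horbG] at hG
  -- orbit-stabilizer for P
  have hP : n * Nat.card S = Nat.card (P : Subgroup G) := by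
    rw [← Nat.card_prod]
    exact Nat.card_congr (MulAction.orbitProdStabilizerEquivGroup (↥(P : Subgroup G)) y)
  -- index
  have hidx : Nat.card (P : Subgroup G) * (P : Subgroup G).index = Nat.card G :=
    Subgroup.card_mul_index _
  -- card S divides card K
  have hSK : Nat.card S ∣ Nat.card K := by
    have hle : S.map (P : Subgroup G).subtype ≤ K := by
      rintro g ⟨s, hs, rfl⟩
      have : s • y = y := hs
      simpa [hK, MulAction.mem_stabilizer_iff, Subgroup.smul_def] using this
    have : Nat.card S = Nat.card (S.map (P : Subgroup G).subtype) :=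
      Nat.card_congr (S.equivMapOfInjective _ (Subgroup.subtype_injective _)).toEquiv
    rw [this]
    exact Subgroup.card_dvd_of_le hle
  obtain ⟨t, ht⟩ := hSK
  -- S nonempty and finite
  haveI : Nonempty S := ⟨1⟩
  have hSpos : 0 < Nat.card S := Nat.card_pos
  -- main equation
  have key : (P : Subgroup G).index * n * Nat.card S = p ^ d * t * Nat.card S := by
    have : (P : Subgroup G).index * (n * Nat.card S) = p ^ d * Nat.card K := by
      rw [hP, mul_comm ((P : Subgroup G).index), hidx, ← hG]
    rw [ht] at this
    ring_nf
    ring_nf at this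
    linarith [this]
  have key2 : (P : Subgroup G).index * n = p ^ d * t :=
    Nat.eq_of_mul_eq_mul_right hSpos key
  have hcop : (Nat.Coprime (p ^ d) (P : Subgroup G).index) :=
    Nat.Coprime.pow_left d ((hp.coprime_iff_not_dvd).mpr (P.not_dvd_index))
  have hdvd : p ^ d ∣ n := by
    refine (Nat.Coprime.dvd_of_dvd_mul_left hcop ?_)
    exact ⟨t, key2⟩
  -- conclude orbit = univ
  haveI : Nonempty (MulAction.orbit (↥(P : Subgroup G)) y) := ⟨⟨y, MulAction.mem_orbit_self y⟩⟩
  have hnpos : 0 < n := Nat.card_pos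
  have hle : p ^ d ≤ n := Nat.le_of_dvd hnpos hdvd
  apply Set.eq_of_subset_of_ncard_le (Set.subset_univ _)
  · rwa [Set.ncard_univ, Nat.card_eq_fintype_card, hΩ, ← Nat.card_coe_set_eq]
end

section
/- Let G be a finite group and H a subgroup. Define Φ^G(H) to be the subgroup of G generated by the commutators [h, x] = h⁻¹x⁻¹hx with x ∈ G and h ∈ H ∩ xHx⁻¹. Then Φ^G(H) is a subgroup of H, it contains the commutator subgroup [H, H], and it is contained in H ∩ [G, G]. -/
/-- For a group `G` and a subgroup `H`, the subgroup `Φ^G(H)` generated by the commutators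
`[h, x] = h⁻¹ * x⁻¹ * h * x` with `x ∈ G` and `h ∈ H ∩ xHx⁻¹` is a subgroup of `H`,
contains the commutator subgroup `[H, H]`, and is contained in `H ∩ [G, G]`. -/
theorem phi_subgroup_le_and_commutator_le
    {G : Type*} [Group G] [Finite G] (H : Subgroup G) :
    Subgroup.closure
        {g : G | ∃ h x : G, h ∈ H ∧ x⁻¹ * h * x ∈ H ∧ g = h⁻¹ * x⁻¹ * h * x} ≤ H ∧
    ⁅H, H⁆ ≤ Subgroup.closure
        {g : G | ∃ h x : G, h ∈ H ∧ x⁻¹ * h * x ∈ H ∧ g = h⁻¹ * x⁻¹ * h * x} ∧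
    Subgroup.closure
        {g : G | ∃ h x : G, h ∈ H ∧ x⁻¹ * h * x ∈ H ∧ g = h⁻¹ * x⁻¹ * h * x} ≤
      H ⊓ commutator G := by
  have hle : Subgroup.closure
      {g : G | ∃ h x : G, h ∈ H ∧ x⁻¹ * h * x ∈ H ∧ g = h⁻¹ * x⁻¹ * h * x} ≤ H := by
    rw [Subgroup.closure_le]
    rintro g ⟨h, x, hh, hxh, rfl⟩
    have : h⁻¹ * (x⁻¹ * h * x) ∈ H := H.mul_mem (H.inv_mem hh) hxh
    simpa [mul_assoc] using this
  refine ⟨hle, ?_, ?_⟩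
  · rw [Subgroup.commutator_le]
    intro a ha b hb
    apply Subgroup.subset_closure
    refine ⟨a⁻¹, b⁻¹, H.inv_mem ha, ?_, ?_⟩
    · simpa using H.mul_mem (H.mul_mem hb (H.inv_mem ha)) (H.inv_mem hb)
    · simp [commutatorElement_def, mul_assoc]
  · refine le_inf hle ?_
    rw [Subgroup.closure_le]
    rintro g ⟨h, x, hh, hxh, rfl⟩
    open scoped commutatorElement in
    have : ⁅h⁻¹, x⁻¹⁆ ∈ commutator G := by
      exact Subgroup.commutator_mem_commutator (Subgroup.mem_top _) (Subgroup.mem_top _)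
    simpa [commutatorElement_def, mul_assoc] using this
end
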